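/- Let m, n be positive natural numbers, let Q_1, …, Q_m and P_1, …, P_m be n×n complex Hermitian positive semidefinite matrices, let Z be an n×n complex Hermitian positive definite matrix, and let σ² > 0 and P_R > 0 be real numbers. For each i set P̃_i = P_i + (σ²/P_R)·Z (which is Hermitian positive definite). Then for every nonzero vector ω ∈ ℂⁿ satisfying ωᴴ Z ω ≤ P_R, one has min_{1 ≤ i ≤ m} (ωᴴ Q_i ω)/(ωᴴ P_i ω + σ²) ≤ min_{1 ≤ i ≤ m} λ_max(P̃_i^{-1/2} Q_i P̃_i^{-1/2}), where the quadratic forms ωᴴ Q_i ω, ωᴴ P_i ω and ωᴴ Z ω are the (real) values of the Hermitian forms, λ_max denotes the largest eigenvalue of a Hermitian matrix, and P̃_i^{-1/2} is the inverse of the Hermitian positive-definite square root of P̃_i. -/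

import Mathlib

/-!
With `S = P̃^{1/2}`, the matrix `λ_max • 1 - S⁻¹ Q S⁻¹` is positive semidefinite, and conjugating it
by `S` gives `Q ≤ λ_max • P̃` in the Loewner order, i.e. `ωᴴ Q ω ≤ λ_max · ωᴴ P̃ ω`. The power
constraint gives `ωᴴ P̃ ω ≤ ωᴴ P ω + σ²`, so each SINR is at most its own `λ_max`, and the infima
compare termwise.
-/

open Matrix
open scoped ComplexOrder

noncomputable def frobNorm {m n : Type*} [Fintype m] [Fintype n] (A : Matrix m n ℂ) : ℝ :=
  Real.sqrt (∑ i, ∑ j, ‖A i j‖ ^ 2)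

noncomputable def lambdaMax {k : Type*} [Fintype k] [DecidableEq k] {A : Matrix k k ℂ}
    (hA : A.IsHermitian) : ℝ := ⨆ i, hA.eigenvalues i

noncomputable def lambdaMin {k : Type*} [Fintype k] [DecidableEq k] {A : Matrix k k ℂ}
    (hA : A.IsHermitian) : ℝ := ⨅ i, hA.eigenvalues i

noncomputable def invSqrt {k : Type*} [Fintype k] [DecidableEq k] {P : Matrix k k ℂ}
    (hP : P.PosDef) : Matrix k k ℂ :=
  (hP.posSemidef.1.eigenvectorUnitary.1 *
    diagonal ((↑) ∘ (Real.sqrt ·) ∘ hP.posSemidef.1.eigenvalues) *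
    (star hP.posSemidef.1.eigenvectorUnitary : Matrix k k ℂ))⁻¹

theorem invSqrt_isHermitian {k : Type*} [Fintype k] [DecidableEq k] {P : Matrix k k ℂ}
    (hP : P.PosDef) : (invSqrt hP).IsHermitian :=
  by
    apply IsHermitian.inv
    simp only [IsHermitian, conjTranspose_mul, Matrix.mul_assoc]
    have hd : (diagonal ((↑) ∘ (Real.sqrt ·) ∘ hP.posSemidef.1.eigenvalues) :
        Matrix k k ℂ)ᴴ = diagonal ((↑) ∘ (Real.sqrt ·) ∘ hP.posSemidef.1.eigenvalues) := by
      rw [diagonal_conjTranspose, diagonal_eq_diagonal_iff]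
      intro i
      simp
    rw [hd, ← star_eq_conjTranspose, star_star]
    rfl

theorem conj_isHermitian {k : Type*} [Fintype k] [DecidableEq k] {P Q : Matrix k k ℂ}
    (hP : P.PosDef) (hQ : Q.IsHermitian) : (invSqrt hP * Q * invSqrt hP).IsHermitian := by
  have h := isHermitian_mul_mul_conjTranspose (invSqrt hP) hQ
  rwa [(invSqrt_isHermitian hP).eq] at h

theorem smul_posDef {k : Type*} [Fintype k] [DecidableEq k] {Z : Matrix k k ℂ}
    (hZ : Z.PosDef) {r : ℝ} (hr : 0 < r) : (((r : ℂ)) • Z).PosDef := by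
  rw [posDef_iff_dotProduct_mulVec]
  constructor
  · show (((r : ℂ)) • Z)ᴴ = _
    rw [conjTranspose_smul, hZ.1.eq]
    congr 1
    simp [RCLike.star_def]
  · intro x hx
    rw [smul_mulVec, dotProduct_smul]
    have h2 := hZ.dotProduct_mulVec_pos hx
    have hc : (0 : ℂ) < (r : ℂ) := by exact_mod_cast hr
    exact smul_pos hc h2

section SquareRoot

variable {k : Type*} [Fintype k] [DecidableEq k] {P : Matrix k k ℂ}

noncomputable def posDefSqrt (hP : P.PosDef) : Matrix k k ℂ :=
  hP.posSemidef.1.eigenvectorUnitary.1 *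
    diagonal ((↑) ∘ (Real.sqrt ·) ∘ hP.posSemidef.1.eigenvalues) *
    (star hP.posSemidef.1.eigenvectorUnitary : Matrix k k ℂ)

theorem invSqrt_eq_inv_posDefSqrt (hP : P.PosDef) : invSqrt hP = (posDefSqrt hP)⁻¹ := rfl

theorem posDefSqrt_isHermitian (hP : P.PosDef) : (posDefSqrt hP).IsHermitian :=
  isHermitian_mul_mul_conjTranspose _ (isHermitian_diagonal_of_self_adjoint _
    (funext fun i => by simp))

theorem posDefSqrt_mul_self (hP : P.PosDef) : posDefSqrt hP * posDefSqrt hP = P := by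
  set U : Matrix k k ℂ := (hP.posSemidef.1.eigenvectorUnitary : Matrix k k ℂ)
  have hU : star U * U = 1 := Unitary.star_mul_self_of_mem hP.posSemidef.1.eigenvectorUnitary.2
  have hDD : diagonal ((↑) ∘ (Real.sqrt ·) ∘ hP.posSemidef.1.eigenvalues) *
      diagonal ((↑) ∘ (Real.sqrt ·) ∘ hP.posSemidef.1.eigenvalues) =
      (diagonal ((↑) ∘ hP.posSemidef.1.eigenvalues) : Matrix k k ℂ) := by
    rw [diagonal_mul_diagonal]
    congr 1
    funext j
    simp [← Complex.ofReal_mul, Real.mul_self_sqrt (hP.posSemidef.eigenvalues_nonneg j)]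
  calc posDefSqrt hP * posDefSqrt hP = U * (diagonal ((↑) ∘ (Real.sqrt ·) ∘
        hP.posSemidef.1.eigenvalues) * (star U * U) * diagonal ((↑) ∘ (Real.sqrt ·) ∘
        hP.posSemidef.1.eigenvalues)) * star U := by
        simp only [posDefSqrt, U, Matrix.mul_assoc]
    _ = P := by
        rw [hU, Matrix.mul_one, hDD]
        exact (hP.posSemidef.1.spectral_theorem.trans (Unitary.conjStarAlgAut_apply _ _)).symm

theorem isUnit_det_posDefSqrt (hP : P.PosDef) : IsUnit (posDefSqrt hP).det := by
  have h := (isUnit_iff_isUnit_det P).mp hP.isUnit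
  rw [← posDefSqrt_mul_self hP, det_mul] at h
  exact (IsUnit.mul_iff.mp h).1

end SquareRoot

section LambdaMax

variable {k : Type*} [Fintype k] [DecidableEq k]

theorem eigenvalues_le_lambdaMax {A : Matrix k k ℂ} (hA : A.IsHermitian) (i : k) :
    hA.eigenvalues i ≤ lambdaMax hA :=
  le_ciSup (Set.finite_range _).bddAbove i

theorem posSemidef_lambdaMax_smul_one_sub {A : Matrix k k ℂ} (hA : A.IsHermitian) :
    ((lambdaMax hA : ℂ) • (1 : Matrix k k ℂ) - A).PosSemidef := by
  set U : Matrix k k ℂ := (hA.eigenvectorUnitary : Matrix k k ℂ)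
  have hU : U * star U = 1 := Unitary.mul_star_self_of_mem hA.eigenvectorUnitary.2
  have hgap : (diagonal fun i => ((lambdaMax hA - hA.eigenvalues i : ℝ) : ℂ)).PosSemidef :=
    PosSemidef.diagonal fun i => by
      simpa using eigenvalues_le_lambdaMax hA i
  convert hgap.mul_mul_conjTranspose_same U using 1
  generalize lambdaMax hA = c at hgap ⊢
  conv_lhs => rw [hA.spectral_theorem, Unitary.conjStarAlgAut_apply]
  have hdiag : (diagonal fun i => ((c - hA.eigenvalues i : ℝ) : ℂ)) =
      (c : ℂ) • 1 - diagonal ((↑) ∘ hA.eigenvalues) := by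
    ext i j
    by_cases hij : i = j <;> simp [diagonal, one_apply, hij]
  rw [hdiag, Matrix.mul_sub, Matrix.sub_mul, Matrix.mul_smul, Matrix.mul_one, Matrix.smul_mul,
    ← star_eq_conjTranspose, hU]
  rfl

theorem posSemidef_lambdaMax_conj_smul_sub {P Q : Matrix k k ℂ} (hP : P.PosDef)
    (hQ : Q.IsHermitian) :
    ((lambdaMax (conj_isHermitian hP hQ) : ℂ) • P - Q).PosSemidef := by
  have hdet := isUnit_det_posDefSqrt hP
  convert (posSemidef_lambdaMax_smul_one_sub (conj_isHermitian hP hQ)).conjTranspose_mul_mul_same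
    (posDefSqrt hP) using 1
  generalize (lambdaMax (conj_isHermitian hP hQ) : ℂ) = c
  rw [(posDefSqrt_isHermitian hP).eq, invSqrt_eq_inv_posDefSqrt, Matrix.mul_sub, Matrix.sub_mul,
    Matrix.mul_smul, Matrix.mul_one, Matrix.smul_mul, posDefSqrt_mul_self]
  simp only [← Matrix.mul_assoc, mul_nonsing_inv _ hdet, Matrix.one_mul]
  simp only [Matrix.mul_assoc, nonsing_inv_mul _ hdet, Matrix.mul_one]

theorem re_dotProduct_mulVec_le_lambdaMax_conj_mul {P Q : Matrix k k ℂ} (hP : P.PosDef)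
    (hQ : Q.IsHermitian) (x : k → ℂ) :
    (star x ⬝ᵥ (Q *ᵥ x)).re ≤ lambdaMax (conj_isHermitian hP hQ) * (star x ⬝ᵥ (P *ᵥ x)).re := by
  have h := (posSemidef_lambdaMax_conj_smul_sub hP hQ).re_dotProduct_nonneg x
  rw [RCLike.re_to_complex, sub_mulVec, dotProduct_sub, smul_mulVec, dotProduct_smul, smul_eq_mul,
    Complex.sub_re, Complex.re_ofReal_mul] at h
  linarith

end LambdaMax

theorem re_dotProduct_add_smul_mulVec_le {k : Type*} [Fintype k] {P Z : Matrix k k ℂ}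
    {x : k → ℂ} {c b : ℝ} (hc : 0 ≤ c) (hx : (star x ⬝ᵥ (Z *ᵥ x)).re ≤ b) :
    (star x ⬝ᵥ ((P + (c : ℂ) • Z) *ᵥ x)).re ≤ (star x ⬝ᵥ (P *ᵥ x)).re + c * b := by
  rw [add_mulVec, dotProduct_add, smul_mulVec, dotProduct_smul, smul_eq_mul, Complex.add_re,
    Complex.re_ofReal_mul]
  gcongr

theorem stmt0_general {m n : ℕ}
    (Q P : Fin m → Matrix (Fin n) (Fin n) ℂ)
    (hQ : ∀ i, (Q i).PosSemidef) (hP : ∀ i, (P i).PosSemidef)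
    {Z : Matrix (Fin n) (Fin n) ℂ} (hZ : Z.PosDef)
    (sigmaSq PR : ℝ) (hsig : 0 < sigmaSq) (hPR : 0 < PR)
    (ω : Fin n → ℂ) (hω : ω ≠ 0)
    (hpow : (star ω ⬝ᵥ (Z *ᵥ ω)).re ≤ PR) :
    (⨅ i : Fin m, (star ω ⬝ᵥ ((Q i) *ᵥ ω)).re / ((star ω ⬝ᵥ ((P i) *ᵥ ω)).re + sigmaSq)) ≤
      ⨅ i : Fin m,
        lambdaMax (conj_isHermitian
          (Matrix.PosDef.posSemidef_add (hP i) (smul_posDef hZ (div_pos hsig hPR)))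
          (hQ i).1) := by
  refine ciInf_mono (Set.finite_range _).bddBelow fun i => ?_
  have hPt := PosDef.posSemidef_add (hP i) (smul_posDef hZ (div_pos hsig hPR))
  have hPt_pos := hPt.re_dotProduct_pos hω
  have hPt_le := re_dotProduct_add_smul_mulVec_le (P := P i) (div_pos hsig hPR).le hpow
  rw [div_mul_cancel₀ _ hPR.ne'] at hPt_le
  calc _ ≤ (star ω ⬝ᵥ (Q i *ᵥ ω)).re /
        (star ω ⬝ᵥ ((P i + ((sigmaSq / PR : ℝ) : ℂ) • Z) *ᵥ ω)).re :=
        div_le_div_of_nonneg_left ((hQ i).re_dotProduct_nonneg ω) hPt_pos hPt_le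
    _ ≤ _ := (div_le_iff₀ hPt_pos).2 (re_dotProduct_mulVec_le_lambdaMax_conj_mul hPt (hQ i).1 ω)

/-- Proposition 1 (minimax upper bound). -/
theorem stmt0 {m n : ℕ} (hm : 0 < m) (hn : 0 < n)
    (Q P : Fin m → Matrix (Fin n) (Fin n) ℂ)
    (hQ : ∀ i, (Q i).PosSemidef) (hP : ∀ i, (P i).PosSemidef)
    {Z : Matrix (Fin n) (Fin n) ℂ} (hZ : Z.PosDef)
    (sigmaSq PR : ℝ) (hsig : 0 < sigmaSq) (hPR : 0 < PR)
    (ω : Fin n → ℂ) (hω : ω ≠ 0)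
    (hpow : (star ω ⬝ᵥ (Z *ᵥ ω)).re ≤ PR) :
    (⨅ i : Fin m, (star ω ⬝ᵥ ((Q i) *ᵥ ω)).re / ((star ω ⬝ᵥ ((P i) *ᵥ ω)).re + sigmaSq)) ≤
      ⨅ i : Fin m,
        lambdaMax (conj_isHermitian
          (Matrix.PosDef.posSemidef_add (hP i) (smul_posDef hZ (div_pos hsig hPR)))
          (hQ i).1) :=
  stmt0_general Q P hQ hP hZ sigmaSq PR hsig hPR ω hω hpow
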